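/- arXiv:2411.08828 — 2 statements merged into one kernel-verified Lean document; each statement's English description precedes it below -/
import Mathlib

section
/- Let a, b, x be complex numbers such that b and b−1 are not nonpositive integers. Then (x·d/dx + b − 1) ₁F₁(a;b;x) = (b−1) ₁F₁(a;b−1;x), i.e. x times the derivative of ₁F₁(a;b;·) at x plus (b−1)·₁F₁(a;b;x) equals (b−1)·₁F₁(a;b−1;x). -/
open Complex

/-- Pochhammer symbol `(q)_n = q (q+1) ⋯ (q+n-1)`. -/
noncomputable def poch (q : ℂ) (n : ℕ) : ℂ := (ascPochhammer ℂ n).eval q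

/-- Confluent hypergeometric function `₁F₁(a; b; x) = ∑ₛ (a)ₛ xˢ / (s! (b)ₛ)`. -/
noncomputable def oneF1 (a b x : ℂ) : ℂ :=
  ∑' s : ℕ, poch a s * x ^ s / ((s.factorial : ℂ) * poch b s)

lemma poch_zero' (q : ℂ) : poch q 0 = 1 := by simp [poch]

lemma poch_succ (q : ℂ) (n : ℕ) : poch q (n + 1) = poch q n * (q + n) := by
  simp [poch, ascPochhammer_succ_right]

lemma poch_succ_left (q : ℂ) (n : ℕ) : poch q (n + 1) = q * poch (q + 1) n := by
  simp [poch, ascPochhammer_succ_left, Polynomial.eval_comp]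

lemma poch_ne_zero {q : ℂ} (hq : ∀ n : ℕ, q ≠ -(n : ℂ)) (n : ℕ) : poch q n ≠ 0 := by
  induction n with
  | zero => simp [poch_zero']
  | succ n ih =>
    rw [poch_succ]
    exact mul_ne_zero ih fun h => hq n (eq_neg_of_add_eq_zero_left h)

/-- coefficient -/
noncomputable def cf (a b : ℂ) (n : ℕ) : ℂ := poch a n / ((n.factorial : ℂ) * poch b n)

lemma cf_succ_norm (a b : ℂ) (hb : ∀ n : ℕ, b ≠ -(n : ℂ)) (n : ℕ) :
    ‖cf a b (n + 1)‖ = ‖cf a b n‖ * (‖a + n‖ / (((n : ℝ) + 1) * ‖b + n‖)) := by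
  have hfac : ((n.factorial : ℂ)) ≠ 0 := Nat.cast_ne_zero.2 n.factorial_ne_zero
  have hbn : (b + n) ≠ 0 := fun h => hb n (eq_neg_of_add_eq_zero_left h)
  have hpb := poch_ne_zero hb n
  have hstep : cf a b (n + 1) = cf a b n * ((a + n) / (((n : ℂ) + 1) * (b + n))) := by
    rw [cf, cf, poch_succ, poch_succ, Nat.factorial_succ]
    push_cast
    field_simp
  rw [hstep, norm_mul, norm_div, norm_mul]
  have hcast : ((n : ℂ) + 1) = ((n + 1 : ℕ) : ℂ) := by push_cast; ring
  rw [hcast, Complex.norm_natCast]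
  push_cast
  ring_nf

/-- master summability lemma -/
lemma master_summable (a b : ℂ) (hb : ∀ n : ℕ, b ≠ -(n : ℂ)) (r : ℝ) (hr : 0 ≤ r) :
    Summable (fun n : ℕ => ‖cf a b n‖ * ((n : ℝ) + 1) * r ^ n) := by
  apply summable_of_ratio_norm_eventually_le (r := 1/2) (by norm_num)
  obtain ⟨N, hN⟩ : ∃ N : ℕ, (N : ℝ) ≥ ‖a‖ + ‖b‖ + 8 * r + 1 := exists_nat_ge _
  filter_upwards [Filter.eventually_ge_atTop N] with n hn
  have hnR : (n : ℝ) ≥ ‖a‖ + ‖b‖ + 8 * r + 1 := le_trans hN (by exact_mod_cast hn)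
  have hna : ‖a + n‖ ≤ ‖a‖ + n := by
    calc ‖a + (n : ℂ)‖ ≤ ‖a‖ + ‖(n : ℂ)‖ := norm_add_le _ _
    _ = ‖a‖ + n := by simp
  have hnb : ‖b + n‖ ≥ (n : ℝ) - ‖b‖ := by
    have h := norm_sub_norm_le ((n : ℂ)) (-b)
    simpa [sub_neg_eq_add, add_comm] using h
  have hcn : 0 ≤ ‖cf a b n‖ := norm_nonneg _
  have hrn : (0:ℝ) ≤ r ^ n := pow_nonneg hr n
  have hbn0 : (0:ℝ) < ‖b + n‖ := by
    have : (0:ℝ) < (n:ℝ) - ‖b‖ := by nlinarith [norm_nonneg a, norm_nonneg b]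
    linarith
  have hD : (0:ℝ) < ((n : ℝ) + 1) * ‖b + n‖ := by positivity
  have hq : ‖a + n‖ / (((n : ℝ) + 1) * ‖b + n‖) * ((((n:ℝ) + 1) + 1) * r)
      ≤ 1/2 * ((n:ℝ) + 1) := by
    rw [div_mul_eq_mul_div, div_le_iff₀ hD]
    have hn0 : (0:ℝ) ≤ (n:ℝ) := Nat.cast_nonneg n
    have ha0 : (0:ℝ) ≤ ‖a‖ := norm_nonneg a
    have hb0 : (0:ℝ) ≤ ‖b‖ := norm_nonneg b
    have e1 : ‖a + n‖ ≤ 2 * (n:ℝ) := by linarith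
    have e2 : (8:ℝ) * r ≤ ‖b + n‖ := by linarith
    calc ‖a + n‖ * ((((n:ℝ) + 1) + 1) * r)
        ≤ (2 * (n:ℝ)) * ((((n:ℝ) + 1) + 1) * r) :=
          mul_le_mul_of_nonneg_right e1 (by positivity)
      _ ≤ 4 * r * ((n:ℝ) + 1) ^ 2 := by
          nlinarith [mul_nonneg hr hn0, mul_nonneg hr (mul_nonneg hn0 hn0)]
      _ = 1/2 * ((n:ℝ) + 1) * (((n:ℝ) + 1) * (8 * r)) := by ring
      _ ≤ 1/2 * ((n:ℝ) + 1) * (((n:ℝ) + 1) * ‖b + n‖) :=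
          mul_le_mul_of_nonneg_left (mul_le_mul_of_nonneg_left e2 (by positivity))
            (by positivity)
  rw [cf_succ_norm a b hb n]
  have h1 : ‖cf a b n‖ * (‖a + n‖ / (((n : ℝ) + 1) * ‖b + n‖)) * (((n:ℝ) + 1) + 1) * r ^ (n + 1)
      ≤ 1/2 * (‖cf a b n‖ * ((n : ℝ) + 1) * r ^ n) := by
    have hA : (0:ℝ) ≤ ‖cf a b n‖ * r ^ n := by positivity
    calc ‖cf a b n‖ * (‖a + n‖ / (((n : ℝ) + 1) * ‖b + n‖)) * (((n:ℝ) + 1) + 1) * r ^ (n + 1)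
        = (‖cf a b n‖ * r ^ n) *
            (‖a + n‖ / (((n : ℝ) + 1) * ‖b + n‖) * ((((n:ℝ) + 1) + 1) * r)) := by
          rw [pow_succ]; ring
      _ ≤ (‖cf a b n‖ * r ^ n) * (1/2 * ((n:ℝ) + 1)) := mul_le_mul_of_nonneg_left hq hA
      _ = 1/2 * (‖cf a b n‖ * ((n : ℝ) + 1) * r ^ n) := by ring
  calc ‖‖cf a b n‖ * (‖a + n‖ / (((n:ℝ) + 1) * ‖b + n‖)) * ((↑(n+1) : ℝ) + 1) * r ^ (n + 1)‖
      = ‖cf a b n‖ * (‖a + n‖ / (((n:ℝ) + 1) * ‖b + n‖)) * (((n:ℝ) + 1) + 1) * r ^ (n + 1) := by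
        rw [Real.norm_of_nonneg (by positivity)]; push_cast; ring
    _ ≤ 1/2 * (‖cf a b n‖ * ((n : ℝ) + 1) * r ^ n) := h1
    _ = 1/2 * ‖‖cf a b n‖ * ((n : ℝ) + 1) * r ^ n‖ := by
        rw [Real.norm_of_nonneg (by positivity)]

lemma summable_term (a b : ℂ) (hb : ∀ n : ℕ, b ≠ -(n : ℂ)) (x : ℂ) :
    Summable (fun n : ℕ => cf a b n * x ^ n) := by
  apply Summable.of_norm_bounded (master_summable a b hb ‖x‖ (norm_nonneg x))
  intro n
  rw [norm_mul, norm_pow]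
  have h0 : (0:ℝ) ≤ ‖cf a b n‖ * (n:ℝ) * ‖x‖ ^ n := by positivity
  nlinarith [h0]

lemma summable_deriv_term (a b : ℂ) (hb : ∀ n : ℕ, b ≠ -(n : ℂ)) (x : ℂ) (R : ℝ)
    (hxR : ‖x‖ ≤ R) (hR1 : (1:ℝ) ≤ R) :
    Summable (fun n : ℕ => cf a b n * ((n : ℂ) * x ^ (n - 1))) := by
  have hR0 : (0:ℝ) ≤ R := le_trans zero_le_one hR1
  apply Summable.of_norm_bounded (master_summable a b hb R hR0)
  intro n
  rw [norm_mul, norm_mul, norm_pow, Complex.norm_natCast]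
  have hp : ‖x‖ ^ (n-1) ≤ R ^ (n-1) := pow_le_pow_left₀ (norm_nonneg x) hxR _
  have hp2 : R ^ (n-1) ≤ R ^ n := pow_le_pow_right₀ hR1 (Nat.sub_le n 1)
  have h2 : (n:ℝ) * ‖x‖ ^ (n-1) ≤ ((n:ℝ)+1) * R ^ n := by
    nlinarith [(Nat.cast_nonneg n : (0:ℝ) ≤ (n:ℝ)), pow_nonneg hR0 n,
      pow_nonneg (norm_nonneg x) (n-1), pow_nonneg hR0 (n-1)]
  calc ‖cf a b n‖ * ((n:ℝ) * ‖x‖ ^ (n - 1)) ≤ ‖cf a b n‖ * (((n:ℝ)+1) * R ^ n) :=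
        mul_le_mul_of_nonneg_left h2 (norm_nonneg _)
    _ = ‖cf a b n‖ * ((n:ℝ)+1) * R ^ n := by ring

lemma key_deriv (a b : ℂ) (hb : ∀ n : ℕ, b ≠ -(n : ℂ)) (x : ℂ) :
    HasDerivAt (fun t => oneF1 a b t) (∑' n : ℕ, cf a b n * ((n : ℂ) * x ^ (n - 1))) x := by
  set R : ℝ := ‖x‖ + 1 with hR
  have hxnn := norm_nonneg x
  have hR1 : (1:ℝ) ≤ R := by rw [hR]; linarith
  have hR0 : (0:ℝ) ≤ R := by linarith
  have hmaster := master_summable a b hb R hR0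
  have hu : Summable (fun n : ℕ => ‖cf a b n‖ * ((n : ℝ) * R ^ (n - 1))) := by
    apply Summable.of_nonneg_of_le (fun n => by positivity) _ hmaster
    intro n
    have hpow : R ^ (n - 1) ≤ R ^ n := pow_le_pow_right₀ hR1 (Nat.sub_le n 1)
    have h2 : (n : ℝ) * R ^ (n-1) ≤ ((n:ℝ) + 1) * R ^ n := by
      nlinarith [(Nat.cast_nonneg n : (0:ℝ) ≤ (n:ℝ)), pow_nonneg hR0 n, pow_nonneg hR0 (n-1)]
    calc ‖cf a b n‖ * ((n : ℝ) * R ^ (n - 1)) ≤ ‖cf a b n‖ * (((n:ℝ)+1) * R ^ n) :=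
          mul_le_mul_of_nonneg_left h2 (norm_nonneg _)
      _ = ‖cf a b n‖ * ((n:ℝ)+1) * R ^ n := by ring
  have heq : (fun t => oneF1 a b t) = (fun t => ∑' n : ℕ, cf a b n * t ^ n) := by
    funext t
    unfold oneF1
    exact tsum_congr fun n => by rw [cf]; ring
  rw [heq]
  have hbound : ∀ (n : ℕ) (y : ℂ), y ∈ Metric.ball (0:ℂ) R →
      ‖cf a b n * ((n : ℂ) * y ^ (n - 1))‖ ≤ ‖cf a b n‖ * ((n : ℝ) * R ^ (n - 1)) := by
    intro n y hy
    rw [norm_mul, norm_mul, norm_pow, Complex.norm_natCast]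
    have hyR : ‖y‖ ≤ R := le_of_lt (by simpa [mem_ball_zero_iff] using hy)
    have hyp : ‖y‖ ^ (n-1) ≤ R ^ (n-1) := pow_le_pow_left₀ (norm_nonneg y) hyR _
    have hn : (0:ℝ) ≤ (n:ℝ) := Nat.cast_nonneg n
    exact mul_le_mul_of_nonneg_left (mul_le_mul_of_nonneg_left hyp hn) (norm_nonneg _)
  have hx0 : x ∈ Metric.ball (0:ℂ) R := by
    rw [mem_ball_zero_iff, hR]; linarith
  exact hasDerivAt_tsum_of_isPreconnected hu Metric.isOpen_ball
    (convex_ball (0:ℂ) R).isPreconnected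
    (fun n y _ => (hasDerivAt_pow n y).const_mul (cf a b n))
    hbound hx0 (summable_term a b hb x) hx0

lemma poch_key (b : ℂ) (n : ℕ) :
    ((n : ℂ) + b - 1) * poch (b - 1) n = (b - 1) * poch b n := by
  have h1 := poch_succ (b - 1) n
  have h2 := poch_succ_left (b - 1) n
  rw [h1] at h2
  rw [show b - 1 + 1 = b by ring] at h2
  calc ((n : ℂ) + b - 1) * poch (b-1) n = poch (b-1) n * (b - 1 + n) := by ring
    _ = (b-1) * poch b n := h2

theorem stmt1 (a b x : ℂ) (hb : ∀ n : ℕ, b ≠ -(n : ℂ)) (hb1 : ∀ n : ℕ, b - 1 ≠ -(n : ℂ)) :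
    x * deriv (fun t => oneF1 a b t) x + (b - 1) * oneF1 a b x = (b - 1) * oneF1 a (b - 1) x := by
  have hD := key_deriv a b hb x
  rw [hD.deriv]
  have hS : oneF1 a b x = ∑' n : ℕ, cf a b n * x ^ n :=
    tsum_congr fun n => by rw [cf]; ring
  have hS1 : oneF1 a (b - 1) x = ∑' n : ℕ, cf a (b - 1) n * x ^ n :=
    tsum_congr fun n => by rw [cf]; ring
  rw [hS, hS1, ← tsum_mul_left, ← tsum_mul_left, ← tsum_mul_left]
  have hsum1 : Summable (fun n : ℕ => cf a b n * ((n : ℂ) * x ^ (n - 1))) :=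
    summable_deriv_term a b hb x (‖x‖ + 1) (by linarith [norm_nonneg x])
      (by linarith [norm_nonneg x])
  rw [← Summable.tsum_add (hsum1.mul_left x) ((summable_term a b hb x).mul_left (b-1))]
  apply tsum_congr
  intro n
  have hcf : ((n : ℂ) + b - 1) * cf a b n = (b - 1) * cf a (b - 1) n := by
    have hpb := poch_ne_zero hb n
    have hpb1 := poch_ne_zero hb1 n
    have hfac : ((n.factorial : ℂ)) ≠ 0 := Nat.cast_ne_zero.2 n.factorial_ne_zero
    rw [cf, cf]
    field_simp
    linear_combination (poch a n) * poch_key b n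
  rcases Nat.eq_zero_or_pos n with hn | hn
  · subst hn
    simp [cf, poch_zero']
  · have hx : x * ((n : ℂ) * x ^ (n - 1)) = (n : ℂ) * x ^ n := by
      rw [mul_left_comm, ← pow_succ']
      congr 2
      omega
    calc x * (cf a b n * ((n : ℂ) * x ^ (n - 1))) + (b - 1) * (cf a b n * x ^ n)
        = cf a b n * (x * ((n : ℂ) * x ^ (n - 1))) + (b - 1) * (cf a b n * x ^ n) := by ring
      _ = cf a b n * ((n : ℂ) * x ^ n) + (b - 1) * (cf a b n * x ^ n) := by rw [hx]
      _ = (((n : ℂ) + b - 1) * cf a b n) * x ^ n := by ring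
      _ = ((b - 1) * cf a (b - 1) n) * x ^ n := by rw [hcf]
      _ = (b - 1) * (cf a (b - 1) n * x ^ n) := by ring
end

section
/- Let a, x, χ be complex numbers with |χ| < 1, and let b be a complex number that is not an integer. Then the generating relation obtained from the one-parameter subgroup lowering the parameter b holds: (1+χ)^{b−1} ₁F₁(a;b; x(1+χ)) = Σ_{ℓ=0}^∞ ((b−ℓ)_ℓ / ℓ!) ₁F₁(a; b−ℓ; x) χ^ℓ, where (1+χ)^{b−1} = exp((b−1)·Log(1+χ)) is taken with the principal branch of the logarithm. -/
open Complex

lemma poch_eq_prod (q : ℂ) (n : ℕ) : poch q n = ∏ j ∈ Finset.range n, (q + j) := by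
  induction n with
  | zero => simp [poch]
  | succ n ih =>
    rw [poch, ascPochhammer_succ_eval, ← poch, ih, Finset.prod_range_succ]

lemma poch_add (q : ℂ) (n m : ℕ) : poch q (n + m) = poch q n * poch (q + n) m := by
  rw [poch_eq_prod, poch_eq_prod, poch_eq_prod, Finset.prod_range_add]
  congr 1
  refine Finset.prod_congr rfl fun j _ => ?_
  push_cast
  ring

lemma poch_ne_zero_s6 {b : ℂ} (hb : ∀ n : ℤ, b ≠ (n : ℂ)) (ℓ m : ℕ) :
    poch (b - ℓ) m ≠ 0 := by
  rw [poch_eq_prod]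
  refine Finset.prod_ne_zero_iff.mpr fun j _ h => ?_
  apply hb ((ℓ : ℤ) - (j : ℤ))
  have hbe : b = (ℓ : ℂ) - (j : ℂ) := by linear_combination h
  rw [hbe]
  push_cast
  ring

lemma key_identity {b : ℂ} (s ℓ : ℕ) :
    (∏ j ∈ Finset.range ℓ, (b + s - 1 - j)) * poch (b - ℓ) s
      = poch (b - ℓ) ℓ * poch b s := by
  have h3 : (∏ j ∈ Finset.range ℓ, (b + s - 1 - j)) = poch (b - ℓ + s) ℓ := by
    rw [poch_eq_prod, ← Finset.prod_range_reflect]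
    refine Finset.prod_congr rfl fun j hj => ?_
    rw [Finset.mem_range] at hj
    have h4 : (ℓ - 1 - j : ℕ) = ℓ - (j + 1) := by omega
    rw [h4, Nat.cast_sub (by omega : j + 1 ≤ ℓ)]
    push_cast
    ring
  have h1 : poch (b - ℓ) (ℓ + s) = poch (b - ℓ) ℓ * poch b s := by
    rw [poch_add]
    congr 2
    ring
  have h2 : poch (b - ℓ) (s + ℓ) = poch (b - ℓ) s * poch (b - ℓ + s) ℓ := poch_add _ _ _
  rw [h3]
  calc poch (b - ℓ + s) ℓ * poch (b - ℓ) s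
      = poch (b - ℓ) (s + ℓ) := by rw [h2]; ring
    _ = poch (b - ℓ) (ℓ + s) := by rw [add_comm]
    _ = poch (b - ℓ) ℓ * poch b s := h1

lemma binom_hasSum (z χ : ℂ) (hχ : ‖χ‖ < 1) :
    HasSum (fun ℓ : ℕ => (∏ j ∈ Finset.range ℓ, (z - j)) / (ℓ.factorial : ℂ) * χ ^ ℓ)
      ((1 + χ) ^ z) := by
  have hmem : ∀ w : ℂ, w ∈ Metric.ball (0 : ℂ) 1 → (1 + w) ∈ Complex.slitPlane := by
    intro w hw
    rw [Metric.mem_ball, dist_zero_right] at hw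
    refine Or.inl ?_
    have h1 : |w.re| < 1 := lt_of_le_of_lt (Complex.abs_re_le_norm w)
      hw
    have h2 := (abs_lt.mp h1).1
    simp only [Complex.add_re, Complex.one_re]
    linarith
  have hdiff : DifferentiableOn ℂ (fun w : ℂ => (1 + w) ^ z) (Metric.ball (0 : ℂ) 1) := by
    intro w hw
    exact (((hasDerivAt_id w).const_add 1).cpow_const (hmem w hw)).differentiableAt.differentiableWithinAt
  have hiter : ∀ n : ℕ, ∀ w ∈ Metric.ball (0 : ℂ) 1,
      iteratedDeriv n (fun w : ℂ => (1 + w) ^ z) w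
        = (∏ j ∈ Finset.range n, (z - j)) * (1 + w) ^ (z - n) := by
    intro n
    induction n with
    | zero => intro w hw; simp
    | succ n ih =>
      intro w hw
      rw [iteratedDeriv_succ]
      have heq : iteratedDeriv n (fun w : ℂ => (1 + w) ^ z)
          =ᶠ[nhds w] fun w' => (∏ j ∈ Finset.range n, (z - j)) * (1 + w') ^ (z - n) :=
        Filter.eventuallyEq_of_mem (Metric.isOpen_ball.mem_nhds hw) ih
      rw [heq.deriv_eq]
      have hd : HasDerivAt (fun w' : ℂ => (1 + w') ^ (z - n))
          ((z - n) * (1 + w) ^ (z - n - 1) * 1) w :=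
        ((hasDerivAt_id w).const_add 1).cpow_const (hmem w hw)
      rw [(hd.const_mul _).deriv, Finset.prod_range_succ]
      push_cast
      rw [show z - ((n : ℂ) + 1) = z - (n : ℂ) - 1 from by ring]
      ring
  have h0 : (0 : ℂ) ∈ Metric.ball (0 : ℂ) 1 := by simp
  have hx : χ ∈ Metric.ball (0 : ℂ) 1 := by
    simpa [Metric.mem_ball, dist_zero_right] using hχ
  have H := Complex.hasSum_taylorSeries_on_ball hdiff hx
  have hfun : (fun ℓ : ℕ => (∏ j ∈ Finset.range ℓ, (z - j)) / (ℓ.factorial : ℂ) * χ ^ ℓ)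
      = fun n : ℕ => (n.factorial : ℂ)⁻¹ • (χ - 0) ^ n •
          iteratedDeriv n (fun w : ℂ => (1 + w) ^ z) 0 := by
    funext n
    rw [hiter n 0 h0]
    simp only [smul_eq_mul, sub_zero, add_zero, Complex.one_cpow]
    ring
  rw [hfun]
  exact H

lemma realBinom (d r : ℝ) (hr : |r| < 1) :
    HasSum (fun ℓ : ℕ => (∏ j ∈ Finset.range ℓ, (d + j)) / (ℓ.factorial : ℝ) * r ^ ℓ)
      ((1 - r) ^ (-d)) := by
  have habs : ‖-(r : ℂ)‖ < 1 := by
    rwa [norm_neg, Complex.norm_real, Real.norm_eq_abs]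
  have H := binom_hasSum (-(d : ℂ)) (-(r : ℂ)) habs
  have hterm : ∀ ℓ : ℕ,
      (((∏ j ∈ Finset.range ℓ, (d + j)) / (ℓ.factorial : ℝ) * r ^ ℓ : ℝ) : ℂ)
        = (∏ j ∈ Finset.range ℓ, (-(d : ℂ) - j)) / (ℓ.factorial : ℂ) * (-(r : ℂ)) ^ ℓ := by
    intro ℓ
    have hp : ∏ j ∈ Finset.range ℓ, (-(d : ℂ) - j)
        = (-1 : ℂ) ^ ℓ * ∏ j ∈ Finset.range ℓ, ((d : ℂ) + j) := by
      rw [show (∏ j ∈ Finset.range ℓ, (-(d : ℂ) - j))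
          = ∏ j ∈ Finset.range ℓ, ((-1) * ((d : ℂ) + j)) from
        Finset.prod_congr rfl fun j _ => by ring]
      rw [Finset.prod_mul_distrib, Finset.prod_const, Finset.card_range]
    have hone : ((-1 : ℂ)) ^ ℓ * ((-1 : ℂ)) ^ ℓ = 1 := by
      rw [← mul_pow]
      norm_num
    rw [hp, neg_pow]
    push_cast
    linear_combination (-(∏ j ∈ Finset.range ℓ, ((d : ℂ) + (j : ℂ))) * (r : ℂ) ^ ℓ /
      (ℓ.factorial : ℂ)) * hone
  have hval : ((1 : ℂ) + -(r : ℂ)) ^ (-(d : ℂ)) = (((1 - r) ^ (-d) : ℝ) : ℂ) := by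
    rw [Complex.ofReal_cpow (by linarith [(abs_lt.mp hr).2] : (0:ℝ) ≤ 1 - r)]
    push_cast
    ring_nf
  rw [hval] at H
  have hfeq : (fun ℓ : ℕ =>
      ((((∏ j ∈ Finset.range ℓ, (d + j)) / (ℓ.factorial : ℝ) * r ^ ℓ) : ℝ) : ℂ))
      = fun ℓ : ℕ => (∏ j ∈ Finset.range ℓ, (-(d : ℂ) - j)) / (ℓ.factorial : ℂ) *
        (-(r : ℂ)) ^ ℓ := funext hterm
  rw [← hfeq] at H
  exact Complex.hasSum_ofReal.mp H

set_option maxHeartbeats 2000000 in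
theorem stmt6 (a b x χ : ℂ) (hb : ∀ n : ℤ, b ≠ (n : ℂ)) (hχ : ‖χ‖ < 1) :
    HasSum (fun ℓ : ℕ => poch (b - ℓ) ℓ / (ℓ.factorial : ℂ) * oneF1 a (b - ℓ) x * χ ^ ℓ)
      ((1 + χ) ^ (b - 1) * oneF1 a b (x * (1 + χ))) := by
  have hpoch_b : ∀ m : ℕ, poch b m ≠ 0 := fun m => by
    simpa using poch_ne_zero_s6 hb 0 m
  have h1χ : (1 : ℂ) + χ ≠ 0 := by
    intro h
    have hχ1 : χ = -1 := by linear_combination h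
    rw [hχ1] at hχ
    simp at hχ
  set r : ℝ := ‖χ‖ with hrdef
  have hr0 : 0 ≤ r := norm_nonneg _
  have hr1 : r < 1 := hχ
  have h1r : 0 < 1 - r := by linarith
  set c₀ : ℝ := ‖b‖ + 2 with hc₀def
  have hc₀0 : 0 ≤ c₀ := by
    rw [hc₀def]; positivity
  set K : ℝ := (1 - r)⁻¹ with hKdef
  have hK0 : 0 < K := by rw [hKdef]; exact inv_pos.mpr h1r
  set F : ℕ × ℕ → ℂ := fun p =>
    poch a p.1 * x ^ p.1 / ((p.1.factorial : ℂ) * poch b p.1) *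
      ((∏ j ∈ Finset.range p.2, (b + p.1 - 1 - j)) / (p.2.factorial : ℂ) * χ ^ p.2) with hFdef
  set A : ℕ → ℝ := fun s =>
    ‖poch a s * x ^ s / ((s.factorial : ℂ) * poch b s)‖ with hAdef
  set g : ℕ → ℕ → ℝ := fun s ℓ =>
    (∏ j ∈ Finset.range ℓ, (c₀ + s + j)) / (ℓ.factorial : ℝ) * r ^ ℓ with hgdef
  have hg : ∀ s : ℕ, HasSum (g s) ((1 - r) ^ (-(c₀ + s)) : ℝ) := by
    intro s
    have := realBinom (c₀ + (s : ℝ)) r (by rwa [_root_.abs_of_nonneg hr0])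
    simpa only [hgdef, add_assoc] using this
  have hbound : ∀ s ℓ, ‖F (s, ℓ)‖ ≤ A s * g s ℓ := by
    intro s ℓ
    have hP : ‖∏ j ∈ Finset.range ℓ, (b + s - 1 - j)‖
        ≤ ∏ j ∈ Finset.range ℓ, (c₀ + s + j) := by
      rw [norm_prod]
      refine Finset.prod_le_prod (fun j _ => norm_nonneg _) fun j _ => ?_
      have h1 : b + s - 1 - j = b + (((s : ℝ) - 1 - j : ℝ) : ℂ) := by push_cast; ring
      rw [h1]
      refine (norm_add_le _ _).trans ?_
      rw [Complex.norm_real, Real.norm_eq_abs, hc₀def]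
      have hs0 : (0:ℝ) ≤ (s:ℝ) := Nat.cast_nonneg s
      have hj0 : (0:ℝ) ≤ (j:ℝ) := Nat.cast_nonneg j
      have : |(s:ℝ) - 1 - j| ≤ (s:ℝ) + 1 + j := by
        rw [abs_le]; constructor <;> linarith
      linarith
    have heq : ‖F (s, ℓ)‖ = A s *
        (‖∏ j ∈ Finset.range ℓ, (b + s - 1 - j)‖ / (ℓ.factorial : ℝ) * r ^ ℓ) := by
      simp only [hFdef, hAdef, hrdef, norm_mul, norm_div, norm_pow,
        Complex.norm_natCast]
    rw [heq]
    have hgℓ : g s ℓ = (∏ j ∈ Finset.range ℓ, (c₀ + s + j)) / (ℓ.factorial : ℝ) * r ^ ℓ := by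
      rw [hgdef]
    rw [hgℓ]
    gcongr
  have hfib : ∀ s, Summable fun ℓ => ‖F (s, ℓ)‖ := fun s =>
    Summable.of_nonneg_of_le (fun ℓ => norm_nonneg _) (hbound s) ((hg s).summable.mul_left (A s))
  have htsum_le : ∀ s, (∑' ℓ, ‖F (s, ℓ)‖) ≤ A s * (1 - r) ^ (-(c₀ + s)) := by
    intro s
    have h2 : HasSum (fun ℓ => A s * g s ℓ) (A s * (1 - r) ^ (-(c₀ + s))) := (hg s).mul_left _
    calc (∑' ℓ, ‖F (s, ℓ)‖) ≤ ∑' ℓ, A s * g s ℓ :=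
          Summable.tsum_le_tsum (hbound s) (hfib s) h2.summable
      _ = A s * (1 - r) ^ (-(c₀ + s)) := h2.tsum_eq
  have hmaj : Summable fun s : ℕ => A s * (1 - r) ^ (-(c₀ + s)) := by
    set u : ℕ → ℝ := fun s => A s * (1 - r) ^ (-(c₀ + s)) with hudef
    have hu_nn : ∀ t, 0 ≤ u t := fun t =>
      mul_nonneg (norm_nonneg _) (Real.rpow_nonneg (le_of_lt h1r) _)
    have hstep : ∀ s : ℕ, u (s + 1) = u s *
        (‖a + s‖ * ‖x‖ * K / (((s:ℝ) + 1) * ‖b + s‖)) := by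
      intro s
      have hbs : b + (s : ℂ) ≠ 0 := by
        intro h
        exact hb (-(s : ℤ)) (by push_cast; linear_combination h)
      have hsf : ((s.factorial : ℂ)) ≠ 0 := Nat.cast_ne_zero.mpr s.factorial_ne_zero
      have e1 : poch a (s + 1) = poch a s * (a + s) := by
        simp [poch, ascPochhammer_succ_eval]
      have e2 : poch b (s + 1) = poch b s * (b + s) := by
        simp [poch, ascPochhammer_succ_eval]
      have ecplx : poch a (s+1) * x ^ (s+1) / (((s+1).factorial : ℂ) * poch b (s+1))
          = (poch a s * x ^ s / ((s.factorial : ℂ) * poch b s)) *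
            ((a + s) * x / (((s:ℂ) + 1) * (b + s))) := by
        rw [e1, e2, Nat.factorial_succ, pow_succ]
        push_cast
        field_simp
      have habs1 : ‖(s:ℂ) + 1‖ = (s:ℝ) + 1 := by
        rw [show ((s:ℂ) + 1) = (((s + 1 : ℕ)) : ℂ) from by push_cast; ring, Complex.norm_natCast]
        push_cast
        ring
      have hA1 : A (s + 1) = A s *
          (‖a + s‖ * ‖x‖ / (((s:ℝ) + 1) * ‖b + s‖)) := by
        simp only [hAdef]
        rw [ecplx]
        simp only [norm_mul, norm_div, habs1]
      have hrp : (1 - r) ^ (-(c₀ + ((s:ℕ) + 1 : ℕ))) = (1 - r) ^ (-(c₀ + (s:ℝ))) * K := by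
        push_cast
        rw [show -(c₀ + ((s:ℝ) + 1)) = -(c₀ + (s:ℝ)) + (-1) from by ring,
          Real.rpow_add h1r, Real.rpow_neg_one, hKdef]
      simp only [hudef]
      push_cast at hrp ⊢
      rw [hA1, hrp]
      ring
    obtain ⟨N, hNge⟩ := exists_nat_ge
      (‖a‖ + 2 * ‖b‖ + 8 * ‖x‖ * K + 1)
    have hev : ∀ᶠ s : ℕ in Filter.atTop, ‖u (s + 1)‖ ≤ (1/2 : ℝ) * ‖u s‖ := by
      refine Filter.eventually_atTop.mpr ⟨N, fun s hs => ?_⟩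
      have hsR : (‖a‖ + 2 * ‖b‖ + 8 * ‖x‖ * K + 1 : ℝ) ≤ s :=
        le_trans hNge (Nat.cast_le.mpr hs)
      have hα : (0:ℝ) ≤ ‖a‖ := norm_nonneg _
      have hβ : (0:ℝ) ≤ ‖b‖ := norm_nonneg _
      have hξ : (0:ℝ) ≤ ‖x‖ := norm_nonneg _
      have f1 : ‖a + s‖ ≤ ‖a‖ + s := by
        refine (norm_add_le _ _).trans ?_
        rw [Complex.norm_natCast]
      have f2 : (s:ℝ) - ‖b‖ ≤ ‖b + s‖ := by
        have h4 := norm_add_le (b + (s:ℂ)) (-b)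
        rw [show b + (s:ℂ) + -b = ((s:ℕ):ℂ) from by ring, norm_neg,
          Complex.norm_natCast] at h4
        linarith
      have hxK : (0:ℝ) ≤ ‖x‖ * K := mul_nonneg hξ hK0.le
      have hs1 : (1:ℝ) ≤ s := by linarith
      have hbspos : (0:ℝ) < ‖b + s‖ := by linarith
      have hden : (0:ℝ) < ((s:ℝ) + 1) * ‖b + s‖ := by positivity
      have hρ : ‖a + s‖ * ‖x‖ * K / (((s:ℝ) + 1) * ‖b + s‖)
          ≤ 1/2 := by
        rw [div_le_iff₀ hden]
        have g1 : ‖a + s‖ ≤ (s:ℝ) + s := by linarith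
        have g2 : ‖x‖ * K ≤ ((s:ℝ) - 1) / 8 := by linarith
        have g3 : ‖b‖ ≤ ((s:ℝ) - 1) / 2 := by linarith
        have t1 : ‖a + s‖ * (‖x‖ * K)
            ≤ ((s:ℝ) + s) * (‖x‖ * K) := mul_le_mul_of_nonneg_right g1 hxK
        have t2 : ((s:ℝ) + s) * (‖x‖ * K) ≤ ((s:ℝ) + s) * (((s:ℝ) - 1) / 8) :=
          mul_le_mul_of_nonneg_left g2 (by linarith)
        have t3 : ((s:ℝ) + 1) * ((s:ℝ) - ‖b‖) ≤ ((s:ℝ) + 1) * ‖b + s‖ :=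
          mul_le_mul_of_nonneg_left f2 (by linarith)
        have t4 : ((s:ℝ) + 1) * (((s:ℝ) + 1) / 2) ≤ ((s:ℝ) + 1) * ((s:ℝ) - ‖b‖) :=
          mul_le_mul_of_nonneg_left (by linarith) (by linarith)
        nlinarith [t1, t2, t3, t4]
      rw [Real.norm_of_nonneg (hu_nn _), Real.norm_of_nonneg (hu_nn _), hstep s]
      have := mul_le_mul_of_nonneg_left hρ (hu_nn s)
      linarith
    exact summable_of_ratio_norm_eventually_le (by norm_num : (1/2:ℝ) < 1) hev
  have hnorm : Summable fun p : ℕ × ℕ => ‖F p‖ := by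
    refine (summable_prod_of_nonneg fun p => norm_nonneg _).mpr ⟨hfib, ?_⟩
    exact Summable.of_nonneg_of_le (fun s => tsum_nonneg fun ℓ => norm_nonneg _) htsum_le hmaj
  have hFsum : Summable F := Summable.of_norm hnorm
  have hrow : ∀ s : ℕ, HasSum (fun ℓ => F (s, ℓ))
      (poch a s * x ^ s / ((s.factorial : ℂ) * poch b s) * (1 + χ) ^ (b + s - 1) ) := fun s =>
    (binom_hasSum (b + s - 1) χ hχ).mul_left _
  have hT : HasSum (fun s : ℕ =>
      poch a s * x ^ s / ((s.factorial : ℂ) * poch b s) * (1 + χ) ^ (b + s - 1))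
      (∑' p : ℕ × ℕ, F p) :=
    hFsum.hasSum.prod_fiberwise hrow
  have hne : (1 + χ) ^ (b - 1) ≠ 0 := by
    simp [Complex.cpow_eq_zero_iff, h1χ]
  have hfeq : (fun s : ℕ =>
      poch a s * x ^ s / ((s.factorial : ℂ) * poch b s) * (1 + χ) ^ (b + s - 1))
      = fun s : ℕ => (1 + χ) ^ (b - 1) *
        (poch a s * (x * (1 + χ)) ^ s / ((s.factorial : ℂ) * poch b s)) := by
    funext s
    rw [show b + s - 1 = (b - 1) + (s : ℂ) from by ring, Complex.cpow_add _ _ h1χ,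
      Complex.cpow_natCast, mul_pow]
    ring
  rw [hfeq] at hT
  have hsum1F1 : HasSum (fun s : ℕ => poch a s * (x * (1 + χ)) ^ s / ((s.factorial : ℂ) * poch b s))
      (((1 + χ) ^ (b - 1))⁻¹ * ∑' p : ℕ × ℕ, F p) := by
    have h4 := hT.mul_left ((1 + χ) ^ (b - 1))⁻¹
    have h5 : (fun s : ℕ => ((1 + χ) ^ (b - 1))⁻¹ * ((1 + χ) ^ (b - 1) *
        (poch a s * (x * (1 + χ)) ^ s / ((s.factorial : ℂ) * poch b s))))
        = fun s : ℕ => poch a s * (x * (1 + χ)) ^ s / ((s.factorial : ℂ) * poch b s) := by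
      funext s
      rw [← mul_assoc, inv_mul_cancel₀ hne, one_mul]
    rwa [h5] at h4
  have hval : (1 + χ) ^ (b - 1) * oneF1 a b (x * (1 + χ)) = ∑' p : ℕ × ℕ, F p := by
    have : oneF1 a b (x * (1 + χ)) = ((1 + χ) ^ (b - 1))⁻¹ * ∑' p : ℕ × ℕ, F p := by
      rw [oneF1]
      exact hsum1F1.tsum_eq
    rw [this, ← mul_assoc, mul_inv_cancel₀ hne, one_mul]
  have hcol : ∀ ℓ : ℕ, HasSum (fun s => F (s, ℓ))
      (poch (b - ℓ) ℓ / (ℓ.factorial : ℂ) * oneF1 a (b - ℓ) x * χ ^ ℓ) := by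
    intro ℓ
    have hfibS : Summable fun s => F (s, ℓ) := hFsum.prod_symm.prod_factor ℓ
    by_cases hχℓ : χ ^ ℓ = 0
    · have hz : (fun s : ℕ => F (s, ℓ)) = fun _ => 0 := by
        funext s; simp [hFdef, hχℓ]
      rw [hz, hχℓ, mul_zero]
      exact hasSum_zero
    · have hlf : ((ℓ.factorial : ℂ)) ≠ 0 := Nat.cast_ne_zero.mpr ℓ.factorial_ne_zero
      have hkey : ∀ s, F (s, ℓ) = (poch (b - ℓ) ℓ / (ℓ.factorial : ℂ) * χ ^ ℓ) *
          (poch a s * x ^ s / ((s.factorial : ℂ) * poch (b - ℓ) s)) := by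
        intro s
        have hbl := poch_ne_zero_s6 hb ℓ s
        have h2 : (∏ j ∈ Finset.range ℓ, (b + s - 1 - j))
            = poch (b - ℓ) ℓ * poch b s / poch (b - ℓ) s := by
          rw [eq_div_iff hbl]; exact key_identity s ℓ
        have hsf : ((s.factorial : ℂ)) ≠ 0 := Nat.cast_ne_zero.mpr s.factorial_ne_zero
        have hbs := hpoch_b s
        simp only [hFdef]
        rw [h2]
        field_simp
      have hc0 : poch (b - ℓ) ℓ / (ℓ.factorial : ℂ) * χ ^ ℓ ≠ 0 :=
        mul_ne_zero (div_ne_zero (poch_ne_zero_s6 hb ℓ ℓ) hlf) hχℓ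
      have hu : Summable fun s => poch a s * x ^ s / ((s.factorial : ℂ) * poch (b - ℓ) s) := by
        have h5 := hfibS.mul_left (poch (b - ℓ) ℓ / (ℓ.factorial : ℂ) * χ ^ ℓ)⁻¹
        refine h5.congr fun s => ?_
        rw [hkey s, ← mul_assoc, inv_mul_cancel₀ hc0, one_mul]
      have h6 := hu.hasSum.mul_left (poch (b - ℓ) ℓ / (ℓ.factorial : ℂ) * χ ^ ℓ)
      have h7 : (fun s : ℕ => (poch (b - ℓ) ℓ / (ℓ.factorial : ℂ) * χ ^ ℓ) *
          (poch a s * x ^ s / ((s.factorial : ℂ) * poch (b - ℓ) s))) = fun s => F (s, ℓ) :=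
        funext fun s => (hkey s).symm
      rw [h7] at h6
      have h8 : (poch (b - ℓ) ℓ / (ℓ.factorial : ℂ) * χ ^ ℓ) *
          (∑' s : ℕ, poch a s * x ^ s / ((s.factorial : ℂ) * poch (b - ℓ) s))
          = poch (b - ℓ) ℓ / (ℓ.factorial : ℂ) * oneF1 a (b - ℓ) x * χ ^ ℓ := by
        rw [oneF1]
        ring
      rwa [h8] at h6
  have hG : Summable fun p : ℕ × ℕ => F p.swap := hFsum.prod_symm
  have hTG : (∑' p : ℕ × ℕ, F p.swap) = ∑' p : ℕ × ℕ, F p :=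
    (Equiv.prodComm ℕ ℕ).tsum_eq F
  have hfin := hG.hasSum.prod_fiberwise (fun ℓ => hcol ℓ)
  rw [hTG] at hfin
  rwa [hval]
end
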